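/- For every m ≥ 1: (a) the estimator δ(x,y) = x (the usual maximum likelihood estimator based on X alone) has constant risk R(δ, λ) = m for every λ ∈ (0,∞)^m; and (b) there exists λ ∈ (0,∞)^m with R(λ̂X, λ) > m − 1/2. Hence (for m ≥ 2, where the minimax risk is m − 1/2) neither estimator based only on X is minimax. -/

import Mathlib

open scoped BigOperators ENNReal

/-- The Poisson(μ) probability of the value `k`. -/
noncomputable def poissonPmf (mu : ℝ) (k : ℕ) : ℝ :=
  mu ^ k * Real.exp (-mu) / (Nat.factorial k)

/-- Joint pmf of (X, Y): X_1, …, X_m, Y independent, X_i ~ Po(λ_i), Y ~ Po(Σ λ_i). -/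
noncomputable def jointPmf (m : ℕ) (lam : Fin m → ℝ) (x : Fin m → ℕ) (y : ℕ) : ℝ :=
  poissonPmf (∑ i, lam i) y * ∏ i, poissonPmf (lam i) (x i)

/-- Risk of an estimator δ under the standardized squared error loss, valued in [0,∞]. -/
noncomputable def risk (m : ℕ) (δ : (Fin m → ℕ) → ℕ → Fin m → ℝ) (lam : Fin m → ℝ) : ℝ≥0∞ :=
  ∑' x : Fin m → ℕ, ∑' y : ℕ,
    ENNReal.ofReal ((∑ i, (δ x y i - lam i) ^ 2 / lam i) * jointPmf m lam x y)

/-- The maximum likelihood estimator λ^ML (real division by zero is 0, giving 0/0 = 0). -/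
noncomputable def estML (m : ℕ) (x : Fin m → ℕ) (y : ℕ) (i : Fin m) : ℝ :=
  ((∑ j, (x j : ℝ)) + (y : ℝ)) / 2 * ((x i : ℝ) / ∑ j, (x j : ℝ))

/-- The shrinkage estimator λ^O. -/
noncomputable def estO (m : ℕ) (x : Fin m → ℕ) (y : ℕ) (i : Fin m) : ℝ :=
  ((∑ j, (x j : ℝ)) + (y : ℝ) + (m : ℝ) - 1) / 2 *
    ((x i : ℝ) / ((∑ j, (x j : ℝ)) + (m : ℝ) - 1))

/-- The second shrinkage estimator λ̂. -/
noncomputable def estHat (m : ℕ) (x : Fin m → ℕ) (y : ℕ) (i : Fin m) : ℝ :=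
  ((∑ j, (x j : ℝ)) + (y : ℝ)) / 2 * ((x i : ℝ) / ((∑ j, (x j : ℝ)) + (m : ℝ) - 1))

/-- The Clevenson–Zidek estimator λ̂X based on X alone. -/
noncomputable def estCZ (m : ℕ) (x : Fin m → ℕ) (y : ℕ) (i : Fin m) : ℝ :=
  (∑ j, (x j : ℝ)) * (x i : ℝ) / ((∑ j, (x j : ℝ)) + (m : ℝ) - 1)

/-!
(a) Poisson variance equals the mean, so each term (X_i − λ_i)²/λ_i of the loss of δ(x) = x has
expectation 1; Tonelli over the product pmf reduces every expectation of a coordinatewise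
additive loss to one-dimensional Poisson moments.

(b) λ̂X shrinks x_i by c_i = x_i (m − 1)/(x· + m − 1) ∈ [0, m − 1]. Writing v = x_i − t,
v² − (v − c_i)² ≤ 2 c_i |v| ≤ (m − 1)(v²/s + s), so at λ ≡ t = s² the risk of δ(x) = x exceeds
that of λ̂X by at most m (m − 1)(t/s + s)/t = 2m(m − 1)/s. Since the former is m, s = 4m² gives
R(λ̂X, λ) ≥ m − (m − 1)/(2m) > m − 1/2.
-/

open Finset

lemma poissonPmf_nonneg {mu : ℝ} (h : 0 ≤ mu) (k : ℕ) : 0 ≤ poissonPmf mu k := by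
  unfold poissonPmf; positivity

lemma succ_mul_poissonPmf_succ (mu : ℝ) (k : ℕ) :
    ((k + 1 : ℕ) : ℝ) * poissonPmf mu (k + 1) = mu * poissonPmf mu k := by
  unfold poissonPmf
  rw [Nat.factorial_succ]
  push_cast
  field_simp
  ring

lemma hasSum_poissonPmf (mu : ℝ) : HasSum (poissonPmf mu) 1 := by
  have h : HasSum (fun k : ℕ => mu ^ k / k.factorial) (Real.exp mu) := by
    rw [Real.exp_eq_exp_ℝ]
    exact NormedSpace.expSeries_div_hasSum_exp mu
  convert h.mul_left (Real.exp (-mu)) using 2 with k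
  · rfl
  · unfold poissonPmf
    ring
  · rw [← Real.exp_add, neg_add_cancel, Real.exp_zero]

lemma hasSum_mul_poissonPmf (mu : ℝ) :
    HasSum (fun k : ℕ => (k : ℝ) * poissonPmf mu k) mu := by
  have h : HasSum (fun k : ℕ => ((k + 1 : ℕ) : ℝ) * poissonPmf mu (k + 1)) mu := by
    simpa only [succ_mul_poissonPmf_succ, mul_one] using (hasSum_poissonPmf mu).mul_left mu
  simpa using (hasSum_nat_add_iff (f := fun k : ℕ => (k : ℝ) * poissonPmf mu k) 1).mp h

lemma hasSum_mul_sub_one_mul_poissonPmf (mu : ℝ) :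
    HasSum (fun k : ℕ => (k : ℝ) * ((k : ℝ) - 1) * poissonPmf mu k) (mu ^ 2) := by
  have h : HasSum (fun k : ℕ =>
      ((k + 2 : ℕ) : ℝ) * (((k + 2 : ℕ) : ℝ) - 1) * poissonPmf mu (k + 2)) (mu ^ 2) := by
    convert (hasSum_poissonPmf mu).mul_left (mu ^ 2) using 2 with k
    · rfl
    · have h2 := succ_mul_poissonPmf_succ mu (k + 1)
      have h1 := succ_mul_poissonPmf_succ mu k
      push_cast at h1 h2 ⊢
      linear_combination ((k : ℝ) + 1) * h2 + mu * h1
    · rw [mul_one]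
  simpa [Finset.sum_range_succ] using
    (hasSum_nat_add_iff (f := fun k : ℕ => (k : ℝ) * ((k : ℝ) - 1) * poissonPmf mu k) 2).mp h

lemma hasSum_sub_sq_mul_poissonPmf (mu : ℝ) :
    HasSum (fun k : ℕ => ((k : ℝ) - mu) ^ 2 * poissonPmf mu k) mu := by
  convert ((hasSum_mul_sub_one_mul_poissonPmf mu).add
    ((hasSum_mul_poissonPmf mu).mul_left (1 - 2 * mu))).add
    ((hasSum_poissonPmf mu).mul_left (mu ^ 2)) using 2 with k
  · ring
  · ring

theorem ENNReal.tsum_pi_prod {n : ℕ} {α : Fin n → Type*} (f : ∀ i, α i → ℝ≥0∞) :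
    ∑' x : (∀ i, α i), ∏ i, f i (x i) = ∏ i, ∑' a, f i a := by
  induction n with
  | zero => simp
  | succ n ih =>
    rw [← (Fin.consEquiv α).tsum_eq, Fin.prod_univ_succ, ← ih (fun i => f i.succ),
      ← ENNReal.tsum_mul_right, ENNReal.tsum_prod']
    refine tsum_congr fun a => ?_
    rw [← ENNReal.tsum_mul_left]
    refine tsum_congr fun x => ?_
    simp [Fin.consEquiv, Fin.prod_univ_succ]

theorem ENNReal.tsum_pi_sum_mul_prod {n : ℕ} {α : Type*} (g p : Fin n → α → ℝ≥0∞)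
    (hp : ∀ i, ∑' a, p i a = 1) :
    ∑' x : Fin n → α, (∑ i, g i (x i)) * ∏ j, p j (x j) = ∑ i, ∑' a, g i a * p i a := by
  simp_rw [Finset.sum_mul]
  rw [Summable.tsum_finsetSum fun _ _ => ENNReal.summable]
  refine Finset.sum_congr rfl fun i _ => ?_
  have hq : ∀ x : Fin n → α, g i (x i) * ∏ j, p j (x j) =
      ∏ j, (if j = i then g i (x j) * p j (x j) else p j (x j)) := by
    intro x
    rw [← Finset.mul_prod_erase univ _ (mem_univ i), ← Finset.mul_prod_erase univ _ (mem_univ i),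
      if_pos rfl, mul_assoc]
    congr 2
    exact Finset.prod_congr rfl fun j hj => (if_neg (ne_of_mem_erase hj)).symm
  rw [tsum_congr hq, ENNReal.tsum_pi_prod (fun j a => if j = i then g i a * p j a else p j a),
    Finset.prod_eq_single i (fun j _ hj => by simp only [if_neg hj, hp]) (by simp)]
  simp

lemma tsum_ofReal_of_hasSum {α : Type*} {f : α → ℝ} {c : ℝ} (hf : ∀ a, 0 ≤ f a)
    (h : HasSum f c) : ∑' a, ENNReal.ofReal (f a) = ENNReal.ofReal c := by
  rw [← ENNReal.ofReal_tsum_of_nonneg hf h.summable, h.tsum_eq]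

lemma tsum_ofReal_poissonPmf {mu : ℝ} (h : 0 ≤ mu) :
    ∑' k : ℕ, ENNReal.ofReal (poissonPmf mu k) = 1 := by
  rw [tsum_ofReal_of_hasSum (poissonPmf_nonneg h) (hasSum_poissonPmf mu), ENNReal.ofReal_one]

lemma jointPmf_nonneg {m : ℕ} {lam : Fin m → ℝ} (hlam : ∀ i, 0 ≤ lam i) (x : Fin m → ℕ)
    (y : ℕ) : 0 ≤ jointPmf m lam x y :=
  mul_nonneg (poissonPmf_nonneg (sum_nonneg fun i _ => hlam i) y)
    (prod_nonneg fun j _ => poissonPmf_nonneg (hlam j) (x j))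

lemma tsum_tsum_ofReal_sum_mul_jointPmf {m : ℕ} {lam : Fin m → ℝ} (hlam : ∀ i, 0 ≤ lam i)
    (g : Fin m → ℕ → ℝ) (hg : ∀ i k, 0 ≤ g i k) :
    ∑' (x : Fin m → ℕ) (y : ℕ), ENNReal.ofReal ((∑ i, g i (x i)) * jointPmf m lam x y) =
      ∑ i, ∑' k : ℕ, ENNReal.ofReal (g i k * poissonPmf (lam i) k) := by
  have hsplit : ∀ x y, ENNReal.ofReal ((∑ i, g i (x i)) * jointPmf m lam x y) =
      ENNReal.ofReal (poissonPmf (∑ i, lam i) y) *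
        ((∑ i, ENNReal.ofReal (g i (x i))) * ∏ j, ENNReal.ofReal (poissonPmf (lam j) (x j))) := by
    intro x y
    rw [← ENNReal.ofReal_sum_of_nonneg fun i _ => hg i _,
      ← ENNReal.ofReal_prod_of_nonneg fun j _ => poissonPmf_nonneg (hlam j) _,
      ← ENNReal.ofReal_mul (sum_nonneg fun i _ => hg i _),
      ← ENNReal.ofReal_mul (poissonPmf_nonneg (sum_nonneg fun i _ => hlam i) _), jointPmf]
    ring_nf
  simp_rw [hsplit, ENNReal.tsum_mul_right, tsum_ofReal_poissonPmf (sum_nonneg fun i _ => hlam i),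
    one_mul]
  refine (ENNReal.tsum_pi_sum_mul_prod (fun i k => ENNReal.ofReal (g i k))
    (fun j k => ENNReal.ofReal (poissonPmf (lam j) k))
    fun j => tsum_ofReal_poissonPmf (hlam j)).trans ?_
  simp only [ENNReal.ofReal_mul (hg _ _)]

theorem risk_id {m : ℕ} {lam : Fin m → ℝ} (hlam : ∀ i, 0 < lam i) :
    risk m (fun x _ i => (x i : ℝ)) lam = m := by
  have hvar (i : Fin m) :
      HasSum (fun k : ℕ => ((k : ℝ) - lam i) ^ 2 / lam i * poissonPmf (lam i) k) 1 := by
    convert (hasSum_sub_sq_mul_poissonPmf (lam i)).div_const (lam i) using 2 with k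
    · rfl
    · ring
    · exact (div_self (hlam i).ne').symm
  have hg (i : Fin m) (k : ℕ) : 0 ≤ ((k : ℝ) - lam i) ^ 2 / lam i :=
    div_nonneg (sq_nonneg _) (hlam i).le
  unfold risk
  rw [tsum_tsum_ofReal_sum_mul_jointPmf (fun i => (hlam i).le) _ hg]
  simp [fun i => tsum_ofReal_of_hasSum
    (fun k => mul_nonneg (hg i k) (poissonPmf_nonneg (hlam i).le k)) (hvar i)]

lemma sq_le_sub_sq_add {v c K s : ℝ} (hc : 0 ≤ c) (hcK : c ≤ K) (hs : 0 < s) :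
    v ^ 2 ≤ (v - c) ^ 2 + K * (v ^ 2 / s + s) := by
  have hamgm : 2 * |v| ≤ v ^ 2 / s + s := by
    rw [div_add' _ _ _ hs.ne', le_div_iff₀ hs]
    nlinarith [sq_nonneg (|v| - s), sq_abs v]
  nlinarith [mul_nonneg (sub_nonneg.2 hcK) (abs_nonneg v),
    mul_nonneg hc (sub_nonneg.2 (le_abs_self v)), mul_le_mul_of_nonneg_left hamgm (hc.trans hcK)]

lemma exists_estCZ_eq_sub {m : ℕ} (hm : 1 ≤ m) (x : Fin m → ℕ) (y : ℕ) (i : Fin m) :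
    ∃ c : ℝ, 0 ≤ c ∧ c ≤ m - 1 ∧ estCZ m x y i = x i - c := by
  have hm1 : (1 : ℝ) ≤ m := by exact_mod_cast hm
  set S := ∑ j, (x j : ℝ)
  have hxS : (x i : ℝ) ≤ S := single_le_sum (fun j _ => Nat.cast_nonneg (x j)) (mem_univ i)
  have hx0 : (0 : ℝ) ≤ x i := Nat.cast_nonneg _
  have hD : 0 ≤ S + m - 1 := by linarith
  refine ⟨x i * (m - 1) / (S + m - 1), by positivity, ?_, ?_⟩
  · exact div_le_of_le_mul₀ hD (by linarith) (by nlinarith)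
  · rcases hD.eq_or_lt with hD0 | hD0
    · have hx : (x i : ℝ) = 0 := by linarith
      simp [estCZ, S, ← hD0, hx]
    · rw [show estCZ m x y i = S * x i / (S + m - 1) from rfl, eq_sub_iff_add_eq,
        ← add_div, div_eq_iff hD0.ne']
      ring

lemma loss_id_le_loss_estCZ_add {m : ℕ} (hm : 1 ≤ m) (x : Fin m → ℕ) (y : ℕ) {t s : ℝ}
    (ht : 0 < t) (hs : 0 < s) :
    ∑ i, ((x i : ℝ) - t) ^ 2 / t ≤
      ∑ i, (estCZ m x y i - t) ^ 2 / t + ∑ i, (m - 1) / t * (((x i : ℝ) - t) ^ 2 / s + s) := by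
  rw [← sum_add_distrib]
  refine sum_le_sum fun i _ => ?_
  obtain ⟨c, hc0, hcm, hc⟩ := exists_estCZ_eq_sub hm x y i
  calc ((x i : ℝ) - t) ^ 2 / t
      ≤ (((x i : ℝ) - t - c) ^ 2 + (m - 1) * (((x i : ℝ) - t) ^ 2 / s + s)) / t := by
        gcongr
        exact sq_le_sub_sq_add hc0 hcm hs
    _ = _ := by rw [hc]; ring

lemma risk_id_le_risk_estCZ_add {m : ℕ} (hm : 1 ≤ m) {s : ℝ} (hs : 0 < s) :
    (m : ℝ≥0∞) ≤ risk m (estCZ m) (fun _ => s ^ 2) + ENNReal.ofReal (2 * m * (m - 1) / s) := by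
  have ht : 0 < s ^ 2 := by positivity
  have hm1 : (1 : ℝ) ≤ m := by exact_mod_cast hm
  set g : Fin m → ℕ → ℝ := fun _ k => (m - 1) / s ^ 2 * (((k : ℝ) - s ^ 2) ^ 2 / s + s)
  have hg (i : Fin m) (k : ℕ) : 0 ≤ g i k :=
    mul_nonneg (div_nonneg (by linarith) ht.le) (by positivity)
  have hmean (i : Fin m) :
      HasSum (fun k => g i k * poissonPmf (s ^ 2) k) (2 * (m - 1) / s) := by
    convert (((hasSum_sub_sq_mul_poissonPmf (s ^ 2)).div_const s).add
      ((hasSum_poissonPmf (s ^ 2)).mul_left s)).mul_left ((m - 1) / s ^ 2) using 2 with k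
    · rfl
    · ring
    · field_simp
      ring
  have hcorr : ∑' (x : Fin m → ℕ) (y : ℕ),
      ENNReal.ofReal ((∑ i, g i (x i)) * jointPmf m (fun _ => s ^ 2) x y) =
        ENNReal.ofReal (2 * m * (m - 1) / s) := by
    rw [tsum_tsum_ofReal_sum_mul_jointPmf (fun _ => ht.le) g hg]
    simp only [fun i => tsum_ofReal_of_hasSum
      (fun k => mul_nonneg (hg i k) (poissonPmf_nonneg ht.le k)) (hmean i),
      sum_const, card_univ, Fintype.card_fin, nsmul_eq_mul]
    rw [← ENNReal.ofReal_natCast, ← ENNReal.ofReal_mul (Nat.cast_nonneg m)]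
    ring_nf
  rw [← risk_id fun _ => ht, ← hcorr]
  unfold risk
  rw [← ENNReal.tsum_add]
  refine ENNReal.tsum_le_tsum fun x => ?_
  rw [← ENNReal.tsum_add]
  refine ENNReal.tsum_le_tsum fun y => ?_
  have hp := jointPmf_nonneg (fun _ => ht.le) x y
  rw [← ENNReal.ofReal_add (mul_nonneg (sum_nonneg fun i _ => by positivity) hp)
    (mul_nonneg (sum_nonneg fun i _ => hg i _) hp), ← add_mul]
  exact ENNReal.ofReal_le_ofReal
    (mul_le_mul_of_nonneg_right (loss_id_le_loss_estCZ_add hm x y ht hs) hp)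

theorem stmt_10 (m : ℕ) (hm : 1 ≤ m) :
    (∀ lam : Fin m → ℝ, (∀ i, 0 < lam i) →
      risk m (fun x _ i => (x i : ℝ)) lam = (m : ℝ≥0∞)) ∧
    (∃ lam : Fin m → ℝ, (∀ i, 0 < lam i) ∧
      ENNReal.ofReal ((m : ℝ) - 1 / 2) < risk m (estCZ m) lam) := by
  refine ⟨fun lam hlam => risk_id hlam, fun _ => (4 * m ^ 2 : ℝ) ^ 2, fun _ => by positivity, ?_⟩
  have hm1 : (1 : ℝ) ≤ m := by exact_mod_cast hm
  have hdeficit : 2 * m * (m - 1) / (4 * m ^ 2 : ℝ) = 1 / 2 - 1 / (2 * m) := by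
    field_simp
    ring
  have hbound := risk_id_le_risk_estCZ_add hm (s := 4 * m ^ 2) (by positivity)
  rw [hdeficit] at hbound
  have hinv : 1 / (2 * m : ℝ) ≤ 1 / 2 := by gcongr; linarith
  calc ENNReal.ofReal ((m : ℝ) - 1 / 2) < ENNReal.ofReal (m - (1 / 2 - 1 / (2 * m))) := by
        have : 0 < 1 / (2 * m : ℝ) := by positivity
        exact (ENNReal.ofReal_lt_ofReal_iff (by linarith)).2 (by linarith)
    _ = m - ENNReal.ofReal (1 / 2 - 1 / (2 * m)) := by
        rw [ENNReal.ofReal_sub _ (by linarith), ENNReal.ofReal_natCast]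
    _ ≤ risk m (estCZ m) _ := tsub_le_iff_right.2 hbound
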